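/- Let E be a real vector space, S ⊆ E a nonempty convex subset, n ≥ 1, and f₀, f₁, …, fₙ : E → ℝ linear maps such that f₀(ω) = 1 for all ω ∈ S. Then the following two statements are equivalent: (1) for every tuple (c₀, c₁, …, cₙ) ∈ ℝ^{n+1} with (c₁, …, cₙ) ≠ 0, the set { c₀·f₀(ω) + Σᵢ₌₁ⁿ cᵢ·fᵢ(ω) : ω ∈ S } equals all of ℝ; (2) for every (t₁, …, tₙ) ∈ ℝⁿ there exists ω ∈ S with fᵢ(ω) = tᵢ for all i = 1, …, n. -/

import Mathlib

/-!
Let `T ⊆ ℝⁿ` be the image of `S` under `ω ↦ (f₁ ω, …, fₙ ω)`. Since `f₀ = 1` on `S`, statement (1)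
says that every nonzero linear functional on `ℝⁿ` takes every real value on `T`, in particular is
unbounded above on `T`. Separating a point from the closed convex set `closure T` by Hahn–Banach
then shows that `T` is dense. A dense convex set in finite dimension has nonempty interior, hence
equals the interior of its closure, which is all of `ℝⁿ`.
-/

open Set Matrix

theorem Convex.dense_of_forall_not_bddAbove {V : Type*} [AddCommGroup V] [Module ℝ V]
    [TopologicalSpace V] [IsTopologicalAddGroup V] [ContinuousSMul ℝ V] [LocallyConvexSpace ℝ V]
    {T : Set V} (hT : Convex ℝ T) (hne : T.Nonempty)
    (h : ∀ g : StrongDual ℝ V, g ≠ 0 → ¬BddAbove (g '' T)) : Dense T := by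
  refine dense_iff_closure_eq.2 <| eq_univ_of_forall fun t => by_contra fun ht => ?_
  obtain ⟨g, u, hgT, hut⟩ := geometric_hahn_banach_closed_point hT.closure isClosed_closure ht
  obtain ⟨x, hx⟩ := hne
  have hg : g ≠ 0 := by
    rintro rfl
    simpa using (hgT x (subset_closure hx)).trans hut
  exact h g hg ⟨u, forall_mem_image.2 fun y hy => (hgT y (subset_closure hy)).le⟩

theorem Convex.eq_univ_of_dense {V : Type*} [NormedAddCommGroup V] [NormedSpace ℝ V]
    [FiniteDimensional ℝ V] {T : Set V} (hT : Convex ℝ T) (hdense : Dense T) : T = univ := by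
  have hspan : affineSpan ℝ T = ⊤ := by
    refine (AffineSubspace.coe_eq_univ_iff _).1 (univ_subset_iff.1 ?_)
    rw [← hdense.closure_eq]
    exact closure_minimal (subset_affineSpan ℝ T) (affineSpan ℝ T).closed_of_finiteDimensional
  have hint := hT.interior_nonempty_iff_affineSpan_eq_top.2 hspan
  rw [← univ_subset_iff, ← interior_univ, ← hdense.closure_eq,
    hT.interior_closure_eq_interior_of_nonempty_interior hint]
  exact interior_subset

theorem exists_dotProduct_eq {ι : Type*} [Fintype ι] [DecidableEq ι] {c : ι → ℝ} (hc : c ≠ 0)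
    (r : ℝ) : ∃ y, c ⬝ᵥ y = r := by
  obtain ⟨i, hi⟩ := Function.ne_iff.1 hc
  exact ⟨Pi.single i (r / c i), by rw [dotProduct_single, mul_div_cancel₀ _ hi]⟩

theorem Convex.eq_univ_iff_forall_dotProduct_eq {ι : Type*} [Fintype ι] [DecidableEq ι]
    {T : Set (ι → ℝ)} (hT : Convex ℝ T) (hne : T.Nonempty) :
    T = univ ↔ ∀ c : ι → ℝ, c ≠ 0 → ∀ r : ℝ, ∃ y ∈ T, c ⬝ᵥ y = r := by
  refine ⟨?_, fun h => hT.eq_univ_of_dense <| hT.dense_of_forall_not_bddAbove hne ?_⟩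
  · rintro rfl c hc r
    simpa using exists_dotProduct_eq hc r
  rintro g hg ⟨u, hu⟩
  set c := (dotProductEquiv ℝ ι).symm g.toLinearMap
  have hgc : ∀ y, g y = c ⬝ᵥ y := fun y =>
    (LinearMap.congr_fun ((dotProductEquiv ℝ ι).apply_symm_apply g.toLinearMap) y).symm
  have hc : c ≠ 0 := by simpa [c] using ContinuousLinearMap.coe_injective.ne hg
  obtain ⟨y, hy, hyu⟩ := h c hc (u + 1)
  have hyu' := hu (mem_image_of_mem g hy)
  rw [hgc, hyu] at hyu'
  linarith

theorem numericalRange_unbounded_iff_joint_range_univ_general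
    {E : Type*} [AddCommGroup E] [Module ℝ E]
    {S : Set E} (hconv : Convex ℝ S) (hne : S.Nonempty)
    {n : ℕ}
    (f₀ : E →ₗ[ℝ] ℝ) (f : Fin n → E →ₗ[ℝ] ℝ)
    (hf₀ : ∀ ω ∈ S, f₀ ω = 1) :
    (∀ (c₀ : ℝ) (c : Fin n → ℝ), c ≠ 0 →
        ∀ t : ℝ, ∃ ω ∈ S, c₀ * f₀ ω + ∑ i, c i * f i ω = t) ↔
      (∀ t : Fin n → ℝ, ∃ ω ∈ S, ∀ i, f i ω = t i) := by
  set L : E →ₗ[ℝ] Fin n → ℝ := LinearMap.pi f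
  have hL : ∀ ω, L ω = fun i => f i ω := fun _ => rfl
  have hshift : ∀ c₀ c t, (∃ ω ∈ S, c₀ * f₀ ω + ∑ i, c i * f i ω = t) ↔
      ∃ y ∈ L '' S, c ⬝ᵥ y = t - c₀ := by
    intro c₀ c t
    simp only [exists_mem_image, hL, dotProduct, eq_sub_iff_add_eq']
    exact exists_congr fun ω => and_congr_right fun hω => by rw [hf₀ ω hω, mul_one]
  have hjoint : (∀ t : Fin n → ℝ, ∃ ω ∈ S, ∀ i, f i ω = t i) ↔ L '' S = univ := by
    simp only [eq_univ_iff_forall, mem_image, hL, funext_iff]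
  rw [hjoint, (hconv.linear_image L).eq_univ_iff_forall_dotProduct_eq (hne.image L)]
  simp only [hshift]
  exact ⟨fun h c hc r => by simpa using h 0 c hc r, fun h c₀ c hc t => h c hc (t - c₀)⟩

/-- Abstract form of Proposition 4.2: for a nonempty convex set `S` of "states"
in a real vector space `E`, linear maps `f₀, f₁, …, fₙ : E → ℝ` with `f₀ ≡ 1`
on `S`, the following are equivalent: (1) every linear combination
`c₀ f₀ + Σ cᵢ fᵢ` with `(c₁,…,cₙ) ≠ 0` attains every real value on `S`;
(2) every tuple `(t₁,…,tₙ) ∈ ℝⁿ` is realized as `(f₁(ω),…,fₙ(ω))` for some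
`ω ∈ S`. -/
theorem numericalRange_unbounded_iff_joint_range_univ
    {E : Type*} [AddCommGroup E] [Module ℝ E]
    {S : Set E} (hconv : Convex ℝ S) (hne : S.Nonempty)
    {n : ℕ} (hn : 1 ≤ n)
    (f₀ : E →ₗ[ℝ] ℝ) (f : Fin n → E →ₗ[ℝ] ℝ)
    (hf₀ : ∀ ω ∈ S, f₀ ω = 1) :
    (∀ (c₀ : ℝ) (c : Fin n → ℝ), c ≠ 0 →
        ∀ t : ℝ, ∃ ω ∈ S, c₀ * f₀ ω + ∑ i, c i * f i ω = t) ↔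
      (∀ t : Fin n → ℝ, ∃ ω ∈ S, ∀ i, f i ω = t i) :=
  numericalRange_unbounded_iff_joint_range_univ_general hconv hne f₀ f hf₀
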